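/- Two-step amplification of the AA θ-ICN method: let R, θ_o, θ_e, k, Δx ∈ ℝ and let u : ℤ → ℂ be the plane wave u(j) = exp(i·k·j·Δx). Then for every j ∈ ℤ, S_{θ_e,R}(S_{θ_o,R}(u))(j) = g_{θ_o}·g_{θ_e}·u(j), where g_θ = 1 − 2βi − 4θβ² + 8θ²β³·i and β = R·sin(kΔx). -/
import Mathlib


open Complex

/-- The two-iteration θ-ICN step with mesh ratio `R` and weight `θ`,
acting on complex-valued grid functions. -/
noncomputable def icnStepC (θ R : ℝ) (u : ℤ → ℂ) : ℤ → ℂ := fun j =>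
  let ut1 : ℤ → ℂ := fun j => u j - (R : ℂ) * (u (j + 1) - u (j - 1))
  let w1 : ℤ → ℂ := fun j => (θ : ℂ) * ut1 j + (1 - (θ : ℂ)) * u j
  let ut2 : ℤ → ℂ := fun j => u j - (R : ℂ) * (w1 (j + 1) - w1 (j - 1))
  let w2 : ℤ → ℂ := fun j => (θ : ℂ) * ut2 j + (1 - (θ : ℂ)) * u j
  u j - (R : ℂ) * (w2 (j + 1) - w2 (j - 1))

/-- Amplification factor of one two-iteration θ-ICN step: `g_θ = 1 - 2βi - 4θβ² + 8θ²β³ i`. -/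
noncomputable def ampFactor (θ β : ℝ) : ℂ :=
  1 - 2 * (β : ℂ) * Complex.I - 4 * (θ : ℂ) * (β : ℂ) ^ 2
    + 8 * (θ : ℂ) ^ 2 * (β : ℂ) ^ 3 * Complex.I

theorem aaICN_two_step_amplification (R θo θe k Δx : ℝ)
    (u : ℤ → ℂ) (hu : ∀ j : ℤ, u j = Complex.exp (Complex.I * k * j * Δx)) (j : ℤ) :
    icnStepC θe R (icnStepC θo R u) j =
      ampFactor θo (R * Real.sin (k * Δx)) * ampFactor θe (R * Real.sin (k * Δx)) * u j := by
  set E : ℂ := Complex.exp (Complex.I * k * Δx) with hE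
  have hEne : E ≠ 0 := Complex.exp_ne_zero _
  have h1 : ∀ m : ℤ, u (m + 1) = E * u m := by
    intro m
    rw [hu, hu, hE, ← Complex.exp_add]
    push_cast
    ring_nf
  have h2 : ∀ m : ℤ, u (m - 1) = E⁻¹ * u m := by
    intro m
    rw [hu, hu, hE, ← Complex.exp_neg, ← Complex.exp_add]
    push_cast
    ring_nf
  have key : ∀ (θ : ℝ) (v : ℤ → ℂ), (∀ m, v (m + 1) = E * v m) →
      (∀ m, v (m - 1) = E⁻¹ * v m) → ∀ m, icnStepC θ R v m =
      (1 - (R : ℂ) * (E - E⁻¹) + (θ : ℂ) * (R : ℂ) ^ 2 * (E - E⁻¹) ^ 2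
        - (θ : ℂ) ^ 2 * (R : ℂ) ^ 3 * (E - E⁻¹) ^ 3) * v m := by
    intro θ v a1 a2 m
    simp only [icnStepC, a1, a2]
    ring
  have hv1 : ∀ m, icnStepC θo R u (m + 1) = E * icnStepC θo R u m := by
    intro m
    rw [key θo u h1 h2, key θo u h1 h2, h1]
    ring
  have hv2 : ∀ m, icnStepC θo R u (m - 1) = E⁻¹ * icnStepC θo R u m := by
    intro m
    rw [key θo u h1 h2, key θo u h1 h2, h2]
    ring
  rw [key θe _ hv1 hv2 j, key θo u h1 h2 j]
  have hE2 : E = Complex.cos ((k : ℂ) * Δx) + Complex.sin ((k : ℂ) * Δx) * Complex.I := by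
    rw [hE, show Complex.I * (k : ℂ) * Δx = ((k : ℂ) * Δx) * Complex.I by ring,
      Complex.exp_mul_I]
  have hEi : E⁻¹ = Complex.cos ((k : ℂ) * Δx) - Complex.sin ((k : ℂ) * Δx) * Complex.I := by
    rw [hE, ← Complex.exp_neg, show -(Complex.I * (k : ℂ) * Δx)
      = (-((k : ℂ) * Δx)) * Complex.I by ring, Complex.exp_mul_I,
      Complex.cos_neg, Complex.sin_neg]
    ring
  have hd : E - E⁻¹ = 2 * Complex.I * Complex.sin ((k : ℂ) * Δx) := by
    rw [hEi, hE2]; ring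
  have hamp : ∀ θ : ℝ, ampFactor θ (R * Real.sin (k * Δx)) =
      1 - (R : ℂ) * (E - E⁻¹) + (θ : ℂ) * (R : ℂ) ^ 2 * (E - E⁻¹) ^ 2
        - (θ : ℂ) ^ 2 * (R : ℂ) ^ 3 * (E - E⁻¹) ^ 3 := by
    intro θ
    rw [ampFactor, hd]
    push_cast
    linear_combination ((-4 : ℂ) * θ * ((R : ℂ) * Complex.sin ((k : ℂ) * Δx)) ^ 2
      + 8 * (θ : ℂ) ^ 2 * ((R : ℂ) * Complex.sin ((k : ℂ) * Δx)) ^ 3 * Complex.I)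
      * Complex.I_sq
  rw [hamp, hamp]
  ring
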